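/- arXiv:2605.01050 — 6 statements merged into one kernel-verified Lean document; each statement's English description precedes it below -/
import Mathlib

section
/- Let Δ > 0, r, δ* > 0, p be real numbers, and let (X, P) be a pair of random variables with X ≥ 0 almost surely, E[X] = r, E[P] = p, and P ≤ pmax(X) almost surely, where pmax(x) = 1 − Δ + x for 0 ≤ x ≤ Δ and pmax(x) = 1 + Δ − x for x ≥ Δ. Then P(X ≥ Δ + δ*) ≤ (1 − Δ + r − p)/(2δ*). -/
/-! The slack `Z = 1 - Δ + X - P` is nonnegative, because `pmax Δ x ≤ 1 - Δ + x` for every `x`,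
and at least `2δ*` wherever `X ≥ Δ + δ*`, where `pmax` is on its decreasing branch. Markov's
inequality for `Z`, whose mean is `1 - Δ + r - p`, gives the bound. -/

open MeasureTheory

/-- Maximal treatment probability compatible with gain `x`. -/
noncomputable def pmax (Δ x : ℝ) : ℝ := if x ≤ Δ then 1 - Δ + x else 1 + Δ - x

theorem pmax_le_one_sub_add (Δ x : ℝ) : pmax Δ x ≤ 1 - Δ + x := by
  unfold pmax
  split_ifs with h
  · exact le_rfl
  · linarith [not_le.mp h]

theorem pmax_of_lt {Δ x : ℝ} (h : Δ < x) : pmax Δ x = 1 + Δ - x := if_neg h.not_ge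

theorem two_mul_le_one_sub_add_sub_of_le_pmax {Δ δ x q : ℝ} (hδ : 0 < δ) (hx : Δ + δ ≤ x)
    (hq : q ≤ pmax Δ x) : 2 * δ ≤ 1 - Δ + x - q := by
  rw [pmax_of_lt (by linarith)] at hq
  linarith

theorem stmt_1_general {Ω : Type*} [MeasurableSpace Ω] (μ : Measure Ω) [IsProbabilityMeasure μ]
    (Δ r δs p : ℝ) (hδ : δs > 0)
    (X P : Ω → ℝ) (hXint : Integrable X μ) (hPint : Integrable P μ)
    (hXmean : ∫ ω, X ω ∂μ = r)
    (hPmean : ∫ ω, P ω ∂μ = p)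
    (hfeas : ∀ᵐ ω ∂μ, P ω ≤ pmax Δ (X ω)) :
    (μ {ω | X ω ≥ Δ + δs}).toReal ≤ (1 - Δ + r - p) / (2 * δs) := by
  set Z : Ω → ℝ := fun ω => 1 - Δ + X ω - P ω
  have hXshift : Integrable (fun ω => 1 - Δ + X ω) μ := (integrable_const (1 - Δ)).add hXint
  have hZint : Integrable Z μ := hXshift.sub hPint
  have hZmean : ∫ ω, Z ω ∂μ = 1 - Δ + r - p := by
    rw [integral_sub hXshift hPint, integral_add (integrable_const _) hXint, integral_const,
      hXmean, hPmean]
    simp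
  have hZnonneg : 0 ≤ᵐ[μ] Z := by
    filter_upwards [hfeas] with ω hω
    exact sub_nonneg.mpr (hω.trans (pmax_le_one_sub_add Δ (X ω)))
  have htail : μ.real {ω | X ω ≥ Δ + δs} ≤ μ.real {ω | 2 * δs ≤ Z ω} := by
    refine ENNReal.toReal_mono (measure_ne_top _ _) (measure_mono_ae ?_)
    filter_upwards [hfeas] with ω hω hX
    exact two_mul_le_one_sub_add_sub_of_le_pmax hδ hX hω
  have markov := mul_meas_ge_le_integral_of_nonneg hZnonneg hZint (2 * δs)
  rw [hZmean] at markov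
  rw [le_div_iff₀ (by positivity)]
  calc μ.real {ω | X ω ≥ Δ + δs} * (2 * δs)
      ≤ μ.real {ω | 2 * δs ≤ Z ω} * (2 * δs) := by gcongr
    _ ≤ 1 - Δ + r - p := by rw [mul_comm]; exact markov

theorem stmt_1 {Ω : Type*} [MeasurableSpace Ω] (μ : Measure Ω) [IsProbabilityMeasure μ]
    (Δ r δs p : ℝ) (hΔ : Δ > 0) (hδ : δs > 0)
    (X P : Ω → ℝ) (hXint : Integrable X μ) (hPint : Integrable P μ)
    (hXge : ∀ᵐ ω ∂μ, X ω ≥ 0)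
    (hXmean : ∫ ω, X ω ∂μ = r)
    (hPmean : ∫ ω, P ω ∂μ = p)
    (hfeas : ∀ᵐ ω ∂μ, P ω ≤ pmax Δ (X ω)) :
    (μ {ω | X ω ≥ Δ + δs}).toReal ≤ (1 - Δ + r - p) / (2 * δs) :=
  stmt_1_general μ Δ r δs p hδ X P hXint hPint hXmean hPmean hfeas
end

section
/- Let Δ > 0, 0 < δ* ≤ Δ, and 0 ≤ r < Δ. Set π = min{ r/(Δ + δ*), (1 − Δ + r − p)/(2δ*) } for a given p with r ≤ p ≤ 1 − Δ + r. Define x_b = (r − π(Δ + δ*))/(1 − π) (assuming π < 1). Then 0 ≤ x_b ≤ Δ, and the two-point distribution assigning mass π to gain Δ + δ* and mass 1 − π to gain x_b has mean r; moreover p lies in the interval [π(Δ+δ*) + (1−π)x_b, π(1−δ*) + (1−π)(1 − Δ + x_b)], so that treatment probabilities can be chosen within their feasible intervals to have mean p. Hence the upper bound min{r/(Δ+δ*), (1−Δ+r−p)/(2δ*)} is attained. -/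
theorem stmt_2 (Δ δs r p π xb : ℝ)
    (hΔ : Δ > 0) (hδ0 : 0 < δs) (hδΔ : δs ≤ Δ)
    (hr0 : 0 ≤ r) (hrΔ : r < Δ)
    (hpl : r ≤ p) (hpu : p ≤ 1 - Δ + r)
    (hπ : π = min (r / (Δ + δs)) ((1 - Δ + r - p) / (2 * δs)))
    (hπ1 : π < 1)
    (hxb : xb = (r - π * (Δ + δs)) / (1 - π)) :
    0 ≤ xb ∧ xb ≤ Δ ∧
    π * (Δ + δs) + (1 - π) * xb = r ∧
    π * (Δ + δs) + (1 - π) * xb ≤ p ∧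
    p ≤ π * (1 - δs) + (1 - π) * (1 - Δ + xb) := by
  have hΔδ : (0:ℝ) < Δ + δs := by linarith
  have hπ0 : 0 ≤ π := by
    rw [hπ]
    apply le_min
    · positivity
    · apply div_nonneg (by linarith) (by linarith)
  have h1 : π * (Δ + δs) ≤ r := by
    have := min_le_left (r / (Δ + δs)) ((1 - Δ + r - p) / (2 * δs))
    rw [← hπ] at this
    calc π * (Δ + δs) ≤ (r / (Δ + δs)) * (Δ + δs) := by nlinarith
      _ = r := by field_simp
  have h2 : 2 * δs * π ≤ 1 - Δ + r - p := by
    have := min_le_right (r / (Δ + δs)) ((1 - Δ + r - p) / (2 * δs))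
    rw [← hπ] at this
    have h2δ : (0:ℝ) < 2 * δs := by linarith
    calc 2 * δs * π ≤ 2 * δs * ((1 - Δ + r - p) / (2 * δs)) := by nlinarith
      _ = 1 - Δ + r - p := by field_simp
  have h1π : (0:ℝ) < 1 - π := by linarith
  have hxb' : (1 - π) * xb = r - π * (Δ + δs) := by
    rw [hxb]; field_simp
  have hx0 : 0 ≤ xb := by nlinarith
  have hxΔ : xb ≤ Δ := by nlinarith
  refine ⟨hx0, hxΔ, by linarith, by linarith, by nlinarith⟩
end

section
/- Let Y(1), Y(0) be {0,1}-valued random variables, A a {0,1}-valued random variable, Y = A·Y(1) + (1−A)·Y(0), V_T = E[Y(1)], V_C = E[Y(0)], V_U = E[Y]. Then P(Y(1) < Y(0)) ≥ max{0, V_C − V_U}. -/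
open MeasureTheory

theorem stmt_6 {Ω : Type*} [MeasurableSpace Ω] (μ : Measure Ω) [IsProbabilityMeasure μ]
    (Y1 Y0 A : Ω → ℝ) (hY1m : Measurable Y1) (hY0m : Measurable Y0) (hAm : Measurable A)
    (hY1b : ∀ ω, Y1 ω = 0 ∨ Y1 ω = 1) (hY0b : ∀ ω, Y0 ω = 0 ∨ Y0 ω = 1)
    (hAb : ∀ ω, A ω = 0 ∨ A ω = 1)
    (Y : Ω → ℝ) (hY : ∀ ω, Y ω = A ω * Y1 ω + (1 - A ω) * Y0 ω)
    (V_T V_C V_U : ℝ)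
    (hVT : ∫ ω, Y1 ω ∂μ = V_T) (hVC : ∫ ω, Y0 ω ∂μ = V_C)
    (hVU : ∫ ω, Y ω ∂μ = V_U) :
    (μ {ω | Y1 ω < Y0 ω}).toReal ≥ max 0 (V_C - V_U) := by
  set S : Set Ω := {ω | Y1 ω < Y0 ω} with hS
  have hSm : MeasurableSet S := measurableSet_lt hY1m hY0m
  have hYm : Measurable Y := by
    have : Y = fun ω => A ω * Y1 ω + (1 - A ω) * Y0 ω := funext hY
    rw [this]
    exact ((hAm.mul hY1m).add ((measurable_const.sub hAm).mul hY0m))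
  -- integrability
  have hbY0 : ∀ ω, |Y0 ω| ≤ 1 := by
    intro ω; rcases hY0b ω with h | h <;> simp [h]
  have hbY : ∀ ω, |Y ω| ≤ 1 := by
    intro ω
    rw [hY ω]
    rcases hAb ω with h | h <;> rcases hY1b ω with h1 | h1 <;> rcases hY0b ω with h0 | h0 <;>
      simp [h, h1, h0]
  have hiY0 : Integrable Y0 μ := by
    refine ⟨hY0m.aestronglyMeasurable, ?_⟩
    exact HasFiniteIntegral.of_bounded (C := 1) (Filter.Eventually.of_forall hbY0)
  have hiY : Integrable Y μ := by
    refine ⟨hYm.aestronglyMeasurable, ?_⟩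
    exact HasFiniteIntegral.of_bounded (C := 1) (Filter.Eventually.of_forall hbY)
  have hiInd : Integrable (S.indicator fun _ => (1 : ℝ)) μ :=
    (integrable_const (1 : ℝ)).indicator hSm
  have hmono : ∀ ω, Y0 ω - Y ω ≤ S.indicator (fun _ => (1 : ℝ)) ω := by
    intro ω
    by_cases hω : ω ∈ S
    · rw [Set.indicator_of_mem hω]
      rcases hAb ω with h | h <;> rcases hY1b ω with h1 | h1 <;> rcases hY0b ω with h0 | h0 <;>
        simp [hY ω, h, h1, h0]
    · rw [Set.indicator_of_notMem hω]
      have hle : Y0 ω ≤ Y1 ω := le_of_not_gt hω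
      rcases hAb ω with h | h <;> simp [hY ω, h] <;> linarith
  have hint : V_C - V_U ≤ (μ S).toReal := by
    have h1 : ∫ ω, (Y0 ω - Y ω) ∂μ ≤ ∫ ω, S.indicator (fun _ => (1 : ℝ)) ω ∂μ :=
      integral_mono (hiY0.sub hiY) hiInd hmono
    rw [integral_sub hiY0 hiY, hVC, hVU] at h1
    rwa [integral_indicator_const (1 : ℝ) hSm, smul_eq_mul, mul_one] at h1
  exact max_le ENNReal.toReal_nonneg hint
end

section
/- Let Y(1), Y(0) be {0,1}-valued random variables, A a {0,1}-valued random variable, and Y = A·Y(1) + (1−A)·Y(0). Then P(Y(1) < Y(0)) ≤ E[Y(0)] − P(Y = 1, A = 0) + (1 − E[Y(1)] − P(Y = 0, A = 1)). -/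
/-!
Pointwise, `𝟙{Y(1) = 0, Y(0) = 1} ≤ A·Y(0) + (1 - A)·(1 - Y(1))`: whichever arm is observed,
harm forces the corresponding term to be `1`. By consistency, `(1 - A)·Y(0) = 𝟙{Y = 1, A = 0}` and
`A·(1 - Y(1)) = 𝟙{Y = 0, A = 1}`, so the right-hand side equals
`Y(0) - 𝟙{Y = 1, A = 0} + (1 - Y(1) - 𝟙{Y = 0, A = 1})`, and the bound follows by taking expectations.
-/

open MeasureTheory

lemma harm_indicator_le {y1 y0 a : ℝ} (hy1 : y1 = 0 ∨ y1 = 1) (hy0 : y0 = 0 ∨ y0 = 1)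
    (ha : a = 0 ∨ a = 1) :
    (if y1 < y0 then 1 else 0 : ℝ) ≤
      y0 - (if a * y1 + (1 - a) * y0 = 1 ∧ a = 0 then 1 else 0)
        + (1 - y1 - (if a * y1 + (1 - a) * y0 = 0 ∧ a = 1 then 1 else 0)) := by
  rcases hy1 with rfl | rfl <;> rcases hy0 with rfl | rfl <;> rcases ha with rfl | rfl <;> norm_num

lemma integrable_of_zero_or_one {Ω : Type*} [MeasurableSpace Ω] {μ : Measure Ω}
    [IsFiniteMeasure μ] {f : Ω → ℝ} (hf : Measurable f) (hb : ∀ ω, f ω = 0 ∨ f ω = 1) :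
    Integrable f μ :=
  .of_bound hf.aestronglyMeasurable 1 <| .of_forall fun ω => by rcases hb ω with h | h <;> simp [h]

lemma measureReal_le_of_indicator_le {Ω : Type*} [MeasurableSpace Ω] {μ : Measure Ω}
    [IsProbabilityMeasure μ] {s t u : Set Ω} {f g : Ω → ℝ} (hs : MeasurableSet s)
    (ht : MeasurableSet t) (hu : MeasurableSet u) (hf : Integrable f μ) (hg : Integrable g μ)
    (hle : ∀ ω, s.indicator 1 ω ≤ f ω - t.indicator 1 ω + (1 - g ω - u.indicator 1 ω)) :
    (μ s).toReal ≤ (∫ ω, f ω ∂μ) - (μ t).toReal + (1 - (∫ ω, g ω ∂μ) - (μ u).toReal) := by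
  have hone : Integrable (fun _ => (1 : ℝ)) μ := integrable_const 1
  have hind : ∀ {v : Set Ω}, MeasurableSet v → Integrable (v.indicator (1 : Ω → ℝ)) μ :=
    fun hv => hone.indicator hv
  have hft : Integrable (fun ω => f ω - t.indicator 1 ω) μ := hf.sub (hind ht)
  have hg' : Integrable (fun ω => 1 - g ω) μ := hone.sub hg
  have hgu : Integrable (fun ω => 1 - g ω - u.indicator 1 ω) μ := hg'.sub (hind hu)
  calc (μ s).toReal = ∫ ω, s.indicator 1 ω ∂μ := (integral_indicator_one hs).symm
    _ ≤ ∫ ω, (f ω - t.indicator 1 ω + (1 - g ω - u.indicator 1 ω)) ∂μ :=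
        integral_mono (hind hs) (hft.add hgu) hle
    _ = _ := by
      rw [integral_add hft hgu, integral_sub hf (hind ht), integral_sub hg' (hind hu),
        integral_sub hone hg, integral_const, integral_indicator_one ht, integral_indicator_one hu]
      simp [Measure.real_def]

theorem stmt_7 {Ω : Type*} [MeasurableSpace Ω] (μ : Measure Ω) [IsProbabilityMeasure μ]
    (Y1 Y0 A : Ω → ℝ) (hY1m : Measurable Y1) (hY0m : Measurable Y0) (hAm : Measurable A)
    (hY1b : ∀ ω, Y1 ω = 0 ∨ Y1 ω = 1) (hY0b : ∀ ω, Y0 ω = 0 ∨ Y0 ω = 1)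
    (hAb : ∀ ω, A ω = 0 ∨ A ω = 1)
    (Y : Ω → ℝ) (hY : ∀ ω, Y ω = A ω * Y1 ω + (1 - A ω) * Y0 ω) :
    (μ {ω | Y1 ω < Y0 ω}).toReal ≤
      (∫ ω, Y0 ω ∂μ) - (μ {ω | Y ω = 1 ∧ A ω = 0}).toReal
      + (1 - (∫ ω, Y1 ω ∂μ) - (μ {ω | Y ω = 0 ∧ A ω = 1}).toReal) := by
  have hYm : Measurable Y := by
    rw [funext hY]; fun_prop
  refine measureReal_le_of_indicator_le (measurableSet_lt hY1m hY0m)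
    ((hYm (measurableSet_singleton 1)).inter (hAm (measurableSet_singleton 0)))
    ((hYm (measurableSet_singleton 0)).inter (hAm (measurableSet_singleton 1)))
    (integrable_of_zero_or_one hY0m hY0b) (integrable_of_zero_or_one hY1m hY1b) fun ω => ?_
  simpa only [Set.indicator_apply, Set.mem_ofPred_eq, Pi.one_apply, hY ω] using
    harm_indicator_le (hY1b ω) (hY0b ω) (hAb ω)
end

section
/- Let Δ ∈ (0,1] and x ∈ [0, Δ]. Suppose Y(1), Y(0) are {0,1}-valued with E[Y(1)] − E[Y(0)] = Δ, and d is a {0,1}-valued rule with value V^d satisfying V^d − E[Y(0)] = x. If additionally P(Y(1) < Y(0)) = 0 (no harmed patients), then P(d = 1) ≤ 1 − Δ + x. -/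
/-!
Pointwise, `d + Y(1) - 1 - (d Y(1) + (1 - d) Y(0)) = -(1 - d)(1 - Y(1) + Y(0)) ≤ 0` for outcomes in
`[0, 1]` and `d ≤ 1`. Taking expectations gives `P(d = 1) + E[Y(1)] ≤ 1 + V^d`, and subtracting
`E[Y(0)]` from `E[Y(1)]` and from `V^d` turns this into `P(d = 1) ≤ 1 - Δ + x`.
-/

open MeasureTheory Set

lemma add_le_one_add_mul_add_one_sub_mul {d y₁ y₀ : ℝ} (hd : d ≤ 1) (hy₁ : y₁ ≤ 1)
    (hy₀ : 0 ≤ y₀) : d + y₁ ≤ 1 + (d * y₁ + (1 - d) * y₀) := by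
  nlinarith [mul_nonneg (sub_nonneg.2 hd) (add_nonneg (sub_nonneg.2 hy₁) hy₀)]

lemma mul_add_one_sub_mul_mem_Icc {d y₁ y₀ : ℝ} (hd : d ∈ Icc (0 : ℝ) 1)
    (hy₁ : y₁ ∈ Icc (0 : ℝ) 1) (hy₀ : y₀ ∈ Icc (0 : ℝ) 1) :
    d * y₁ + (1 - d) * y₀ ∈ Icc (0 : ℝ) 1 := by
  obtain ⟨hd0, hd1⟩ := hd
  obtain ⟨hy₁0, hy₁1⟩ := hy₁
  obtain ⟨hy₀0, hy₀1⟩ := hy₀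
  constructor <;> nlinarith [mul_nonneg hd0 hy₁0, mul_nonneg (sub_nonneg.2 hd1) hy₀0,
    mul_le_mul_of_nonneg_left hy₁1 hd0, mul_le_mul_of_nonneg_left hy₀1 (sub_nonneg.2 hd1)]

lemma mem_Icc_of_eq_zero_or_eq_one {a : ℝ} (h : a = 0 ∨ a = 1) : a ∈ Icc (0 : ℝ) 1 := by
  rcases h with rfl | rfl <;> norm_num

section

variable {Ω : Type*} [MeasurableSpace Ω] {μ : Measure Ω}

lemma integral_eq_measureReal_of_eq_zero_or_eq_one {f : Ω → ℝ} (hf : Measurable f)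
    (h01 : ∀ ω, f ω = 0 ∨ f ω = 1) : ∫ ω, f ω ∂μ = μ.real {ω | f ω = 1} := by
  have hf_eq : f = {ω | f ω = 1}.indicator 1 := by
    ext ω
    rcases h01 ω with h | h <;> simp [h]
  have hs : MeasurableSet {ω | f ω = 1} := hf (measurableSet_singleton 1)
  rw [← integral_indicator_one hs, ← hf_eq]

lemma integral_add_integral_le_one_add_integral [IsProbabilityMeasure μ] {d y₁ y₀ : Ω → ℝ}
    (hd : Measurable d) (hy₁ : Measurable y₁) (hy₀ : Measurable y₀)
    (hd01 : ∀ ω, d ω ∈ Icc (0 : ℝ) 1) (hy₁01 : ∀ ω, y₁ ω ∈ Icc (0 : ℝ) 1)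
    (hy₀01 : ∀ ω, y₀ ω ∈ Icc (0 : ℝ) 1) :
    (∫ ω, d ω ∂μ) + ∫ ω, y₁ ω ∂μ ≤ 1 + ∫ ω, (d ω * y₁ ω + (1 - d ω) * y₀ ω) ∂μ := by
  have hd_int : Integrable d μ := .of_mem_Icc 0 1 hd.aemeasurable (.of_forall hd01)
  have hy₁_int : Integrable y₁ μ := .of_mem_Icc 0 1 hy₁.aemeasurable (.of_forall hy₁01)
  have hv_int : Integrable (fun ω ↦ d ω * y₁ ω + (1 - d ω) * y₀ ω) μ :=
    .of_mem_Icc 0 1 (by fun_prop)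
      (.of_forall fun ω ↦ mul_add_one_sub_mul_mem_Icc (hd01 ω) (hy₁01 ω) (hy₀01 ω))
  calc (∫ ω, d ω ∂μ) + ∫ ω, y₁ ω ∂μ = ∫ ω, (d ω + y₁ ω) ∂μ :=
        (integral_add hd_int hy₁_int).symm
    _ ≤ ∫ ω, (1 + (d ω * y₁ ω + (1 - d ω) * y₀ ω)) ∂μ :=
        integral_mono (hd_int.add hy₁_int) ((integrable_const 1).add hv_int) fun ω ↦
          add_le_one_add_mul_add_one_sub_mul (hd01 ω).2 (hy₁01 ω).2 (hy₀01 ω).1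
    _ = 1 + ∫ ω, (d ω * y₁ ω + (1 - d ω) * y₀ ω) ∂μ := by
        rw [integral_add (integrable_const 1) hv_int, integral_const, probReal_univ, one_smul]

end

theorem stmt_15_general {Ω : Type*} [MeasurableSpace Ω] (μ : Measure Ω) [IsProbabilityMeasure μ]
    (Δ x : ℝ)
    (Y1 Y0 d : Ω → ℝ) (hY1m : Measurable Y1) (hY0m : Measurable Y0) (hdm : Measurable d)
    (hY1b : ∀ ω, Y1 ω = 0 ∨ Y1 ω = 1) (hY0b : ∀ ω, Y0 ω = 0 ∨ Y0 ω = 1)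
    (hdb : ∀ ω, d ω = 0 ∨ d ω = 1)
    (hATE : (∫ ω, Y1 ω ∂μ) - (∫ ω, Y0 ω ∂μ) = Δ)
    (hgain : (∫ ω, (d ω * Y1 ω + (1 - d ω) * Y0 ω) ∂μ) - (∫ ω, Y0 ω ∂μ) = x) :
    (μ {ω | d ω = 1}).toReal ≤ 1 - Δ + x := by
  have hP : (μ {ω | d ω = 1}).toReal = ∫ ω, d ω ∂μ :=
    (integral_eq_measureReal_of_eq_zero_or_eq_one hdm hdb).symm
  have hbound := integral_add_integral_le_one_add_integral (μ := μ) hdm hY1m hY0m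
    (fun ω ↦ mem_Icc_of_eq_zero_or_eq_one (hdb ω)) (fun ω ↦ mem_Icc_of_eq_zero_or_eq_one (hY1b ω))
    (fun ω ↦ mem_Icc_of_eq_zero_or_eq_one (hY0b ω))
  linarith

theorem stmt_15 {Ω : Type*} [MeasurableSpace Ω] (μ : Measure Ω) [IsProbabilityMeasure μ]
    (Δ x : ℝ) (hΔ0 : 0 < Δ) (hΔ1 : Δ ≤ 1) (hx0 : 0 ≤ x) (hxΔ : x ≤ Δ)
    (Y1 Y0 d : Ω → ℝ) (hY1m : Measurable Y1) (hY0m : Measurable Y0) (hdm : Measurable d)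
    (hY1b : ∀ ω, Y1 ω = 0 ∨ Y1 ω = 1) (hY0b : ∀ ω, Y0 ω = 0 ∨ Y0 ω = 1)
    (hdb : ∀ ω, d ω = 0 ∨ d ω = 1)
    (hATE : (∫ ω, Y1 ω ∂μ) - (∫ ω, Y0 ω ∂μ) = Δ)
    (hgain : (∫ ω, (d ω * Y1 ω + (1 - d ω) * Y0 ω) ∂μ) - (∫ ω, Y0 ω ∂μ) = x)
    (hnoharm : μ {ω | Y1 ω < Y0 ω} = 0) :
    (μ {ω | d ω = 1}).toReal ≤ 1 - Δ + x :=
  stmt_15_general μ Δ x Y1 Y0 d hY1m hY0m hdm hY1b hY0b hdb hATE hgain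
end

section
/- Let Δ > 0, r with 0 ≤ r < Δ, δ* > 0, and p with p ≥ r. If π satisfies π ≤ min{ r/(Δ + δ*), (1 − Δ + r − p)/(2δ*) } and π < 1, then with x_b = (r − π(Δ + δ*))/(1 − π) we have: (i) 0 ≤ x_b ≤ Δ, and (ii) π(Δ + δ*) + (1 − π)x_b = r, and (iii) p ≤ π(1 − δ*) + (1 − π)(1 − Δ + x_b). -/
theorem stmt_16 (Δ r δs p π xb : ℝ)
    (hΔ : Δ > 0) (hr0 : 0 ≤ r) (hrΔ : r < Δ) (hδ : δs > 0) (hpr : p ≥ r)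
    (hπub : π ≤ min (r / (Δ + δs)) ((1 - Δ + r - p) / (2 * δs)))
    (hπ0 : 0 ≤ π) (hπ1 : π < 1)
    (hxb : xb = (r - π * (Δ + δs)) / (1 - π)) :
    (0 ≤ xb ∧ xb ≤ Δ) ∧
    π * (Δ + δs) + (1 - π) * xb = r ∧
    p ≤ π * (1 - δs) + (1 - π) * (1 - Δ + xb) := by
  have h1π : (0:ℝ) < 1 - π := by linarith
  have hΔδ : (0:ℝ) < Δ + δs := by linarith
  have h2δ : (0:ℝ) < 2 * δs := by linarith
  have h1' : π * (Δ + δs) ≤ r :=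
    (le_div_iff₀ hΔδ).mp (le_trans hπub (min_le_left _ _))
  have h2' : π * (2 * δs) ≤ 1 - Δ + r - p :=
    (le_div_iff₀ h2δ).mp (le_trans hπub (min_le_right _ _))
  have hxb' : (1 - π) * xb = r - π * (Δ + δs) := by
    rw [hxb]; field_simp
  have hxb0 : 0 ≤ xb := by
    rw [hxb]; exact div_nonneg (by linarith) h1π.le
  have hxbΔ : xb ≤ Δ := by
    rw [hxb, div_le_iff₀ h1π]
    nlinarith [mul_nonneg hπ0 hδ.le]
  refine ⟨⟨hxb0, hxbΔ⟩, by linarith, by nlinarith⟩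
end
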